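/- Let α > 0 and θ > 2. The coefficient array β defined by β_{j,k} = 2^{−j/2} if k < 2^{j/(1+2α)} and β_{j,k} = 0 otherwise does NOT satisfy the condition A^α_θ, i.e., sup_{J∈ℕ} 2^{2Jα} Σ_{j≥J} t_{j,J}(β) = ∞. -/

import Mathlib

/-!
At level `j` the array has about `2^{j/(1+2α)}` coefficients equal to `2^{-j/2}`. Put
`m = ⌊j/(1+2α)⌋` and `J = m + L`, with `j` so large that `j - J + 1 ≥ 2^{L+1}`. Then
`N(J,j) ≤ 2^J / 2^{L+1} = 2^{m-1}`, so at least `2^{m-1}` of these coefficients lie outside any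
admissible set, and `2^{2Jα} t_{j,J} ≥ 2^{2(m+L)α + m - 1 - j} ≥ 2^{2αL - 2 - 2α}`, which is
unbounded in `L`. The sums over `j` are summable because the level energies decay like
`2^{-2αj/(1+2α)}`; this matters, since `tsum` of a non-summable family is `0`.
-/

open scoped BigOperators

/-- `N(J,j) = min(⌊2^J (j−J+1)^{−θ}⌋, 2^j)`. -/
noncomputable def NJj (θ : ℝ) (J j : ℕ) : ℕ :=
  min ⌊(2 : ℝ) ^ J * ((j : ℝ) - (J : ℝ) + 1) ^ (-θ)⌋₊ (2 ^ j)

/-- `t_{j,J}(β)`: the minimum over subsets `A` of `{0,…,2^j−1}` of cardinality `N(J,j)`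
of `Σ_{k ∉ A} β_{j,k}²`, i.e. the sum of squares of all but the `N(J,j)` largest
`|β_{j,k}|` at level `j`. -/
noncomputable def tTail (β : ℕ → ℕ → ℝ) (θ : ℝ) (J j : ℕ) : ℝ :=
  sInf {x : ℝ | ∃ A : Finset ℕ, A ⊆ Finset.range (2 ^ j) ∧ A.card = NJj θ J j ∧
    x = ∑ k ∈ Finset.range (2 ^ j) \ A, (β j k) ^ 2}

/-- The condition `A^α_θ`. -/
def CondA (β : ℕ → ℕ → ℝ) (α θ : ℝ) : Prop :=
  ∃ C : ℝ, ∀ J : ℕ,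
    (2 : ℝ) ^ (2 * (J : ℝ) * α) *
      ∑' j : ℕ, (if J ≤ j then tTail β θ J j else 0) ≤ C

open Finset

section General

variable (β : ℕ → ℕ → ℝ) (θ : ℝ) (J j : ℕ)

lemma NJj_le_two_pow : NJj θ J j ≤ 2 ^ j := min_le_right _ _

lemma le_tTail {b : ℝ}
    (h : ∀ A : Finset ℕ, A ⊆ range (2 ^ j) → A.card = NJj θ J j →
      b ≤ ∑ k ∈ range (2 ^ j) \ A, β j k ^ 2) :
    b ≤ tTail β θ J j := by
  obtain ⟨A, hA, hcard⟩ := exists_subset_card_eq (s := range (2 ^ j))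
    (by simpa using NJj_le_two_pow θ J j)
  refine le_csInf ⟨_, A, hA, hcard, rfl⟩ ?_
  rintro x ⟨A, hA, hcard, rfl⟩
  exact h A hA hcard

lemma tTail_nonneg : 0 ≤ tTail β θ J j :=
  le_tTail β θ J j fun _ _ _ => by positivity

lemma tTail_le_sum_sq : tTail β θ J j ≤ ∑ k ∈ range (2 ^ j), β j k ^ 2 := by
  obtain ⟨A, hA, hcard⟩ := exists_subset_card_eq (s := range (2 ^ j))
    (by simpa using NJj_le_two_pow θ J j)
  have hbdd : BddBelow {x : ℝ | ∃ A : Finset ℕ, A ⊆ range (2 ^ j) ∧ A.card = NJj θ J j ∧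
      x = ∑ k ∈ range (2 ^ j) \ A, β j k ^ 2} := by
    refine ⟨0, ?_⟩
    rintro x ⟨B, -, -, rfl⟩
    positivity
  exact (csInf_le hbdd ⟨A, hA, hcard, rfl⟩).trans
    (sum_le_sum_of_subset_of_nonneg sdiff_subset fun _ _ _ => sq_nonneg _)

lemma card_sub_NJj_mul_le_tTail {S : Finset ℕ} (hS : S ⊆ range (2 ^ j)) {c : ℝ} (hc : 0 ≤ c)
    (hβ : ∀ k ∈ S, c ≤ β j k ^ 2) :
    ((S.card : ℝ) - NJj θ J j) * c ≤ tTail β θ J j := by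
  refine le_tTail β θ J j fun A _ hcard => ?_
  have hcount : (S.card : ℝ) - A.card ≤ (S \ A).card := by
    have := card_le_card_sdiff_add_card (s := S) (t := A)
    rw [sub_le_iff_le_add]
    exact_mod_cast this
  calc ((S.card : ℝ) - NJj θ J j) * c ≤ (S \ A).card * c := by
        rw [← hcard]; exact mul_le_mul_of_nonneg_right hcount hc
    _ = ∑ k ∈ S \ A, c := by rw [sum_const, nsmul_eq_mul]
    _ ≤ ∑ k ∈ S \ A, β j k ^ 2 := sum_le_sum fun k hk => hβ k (mem_sdiff.1 hk).1
    _ ≤ ∑ k ∈ range (2 ^ j) \ A, β j k ^ 2 :=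
        sum_le_sum_of_subset_of_nonneg (sdiff_subset_sdiff hS le_rfl)
          fun _ _ _ => sq_nonneg _

lemma NJj_le_two_pow_div {θ : ℝ} (hθ : 1 ≤ θ) {J j n : ℕ}
    (hgap : (2 : ℝ) ^ n ≤ (j : ℝ) - J + 1) :
    (NJj θ J j : ℝ) ≤ 2 ^ J / 2 ^ n := by
  have hone : (1 : ℝ) ≤ (j : ℝ) - J + 1 := le_trans (one_le_pow₀ one_le_two) hgap
  have hpow : (2 : ℝ) ^ n ≤ ((j : ℝ) - J + 1) ^ θ :=
    hgap.trans (by simpa using Real.rpow_le_rpow_of_exponent_le hone hθ)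
  calc (NJj θ J j : ℝ) ≤ (2 : ℝ) ^ J * ((j : ℝ) - J + 1) ^ (-θ) :=
        (Nat.cast_le.2 (min_le_left _ _)).trans (Nat.floor_le (by positivity))
    _ ≤ 2 ^ J / 2 ^ n := by
        rw [Real.rpow_neg (by linarith), ← div_eq_mul_inv]
        gcongr

variable {β θ}

lemma summable_ite_tTail (hβ : Summable fun j => ∑ k ∈ range (2 ^ j), β j k ^ 2) (J : ℕ) :
    Summable fun j => if J ≤ j then tTail β θ J j else 0 := by
  refine hβ.of_nonneg_of_le (fun j => ?_) (fun j => ?_)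
  · split_ifs
    exacts [tTail_nonneg β θ J j, le_rfl]
  · split_ifs
    exacts [tTail_le_sum_sq β θ J j, by positivity]

lemma not_condA_of_unbounded {α : ℝ} (hβ : Summable fun j => ∑ k ∈ range (2 ^ j), β j k ^ 2)
    (hunb : ∀ C : ℝ, ∃ J j : ℕ, J ≤ j ∧ C < (2 : ℝ) ^ (2 * (J : ℝ) * α) * tTail β θ J j) :
    ¬ CondA β α θ := by
  rintro ⟨C, hC⟩
  obtain ⟨J, j, hJj, hlt⟩ := hunb C
  have hterm : tTail β θ J j ≤ ∑' i : ℕ, (if J ≤ i then tTail β θ J i else 0) := by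
    simpa [if_pos hJj] using (summable_ite_tTail hβ J).le_tsum j fun i _ => by
      split_ifs
      exacts [tTail_nonneg β θ J i, le_rfl]
  have := mul_le_mul_of_nonneg_left hterm (by positivity : (0 : ℝ) ≤ 2 ^ (2 * (J : ℝ) * α))
  linarith [hC J]

end General

section s₁

/-- The coefficient array of the function `s₁`. -/
noncomputable def s₁Coeff (α : ℝ) (j k : ℕ) : ℝ :=
  if (k : ℝ) < (2 : ℝ) ^ ((j : ℝ) / (1 + 2 * α)) then (2 : ℝ) ^ (-(j : ℝ) / 2) else 0

variable {α : ℝ}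

lemma s₁Coeff_sq (j k : ℕ) :
    s₁Coeff α j k ^ 2 =
      if (k : ℝ) < (2 : ℝ) ^ ((j : ℝ) / (1 + 2 * α)) then (2 : ℝ) ^ (-(j : ℝ)) else 0 := by
  unfold s₁Coeff
  split_ifs
  · rw [← Real.rpow_mul_natCast zero_le_two]
    congr 1
    push_cast
    ring
  · ring

lemma sum_sq_s₁Coeff_le (hα : 0 < α) (j : ℕ) :
    ∑ k ∈ range (2 ^ j), s₁Coeff α j k ^ 2 ≤ 2 * ((2 : ℝ) ^ (1 / (1 + 2 * α) - 1)) ^ j := by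
  set x : ℝ := (2 : ℝ) ^ ((j : ℝ) / (1 + 2 * α))
  have hx : 1 ≤ x := Real.one_le_rpow one_le_two (by positivity)
  have hcard : ((range (2 ^ j)).filter fun k : ℕ => (k : ℝ) < x).card ≤ 2 * x := by
    have hsub : (range (2 ^ j)).filter (fun k : ℕ => (k : ℝ) < x) ⊆ range ⌈x⌉₊ :=
      fun k hk => mem_range.2 (Nat.lt_ceil.2 (mem_filter.1 hk).2)
    calc (((range (2 ^ j)).filter fun k : ℕ => (k : ℝ) < x).card : ℝ) ≤ ⌈x⌉₊ := by
          exact_mod_cast (card_le_card hsub).trans (card_range _).le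
      _ ≤ 2 * x := by linarith [Nat.ceil_lt_add_one (by linarith : (0 : ℝ) ≤ x)]
  calc ∑ k ∈ range (2 ^ j), s₁Coeff α j k ^ 2
      = ((range (2 ^ j)).filter fun k : ℕ => (k : ℝ) < x).card * (2 : ℝ) ^ (-(j : ℝ)) := by
        simp only [s₁Coeff_sq, ← sum_filter, sum_const, nsmul_eq_mul, x]
    _ ≤ 2 * x * (2 : ℝ) ^ (-(j : ℝ)) := by gcongr
    _ = 2 * ((2 : ℝ) ^ (1 / (1 + 2 * α) - 1)) ^ j := by
        rw [mul_assoc, ← Real.rpow_add two_pos, ← Real.rpow_mul_natCast zero_le_two]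
        ring_nf

lemma summable_sum_sq_s₁Coeff (hα : 0 < α) :
    Summable fun j => ∑ k ∈ range (2 ^ j), s₁Coeff α j k ^ 2 := by
  have hr : (2 : ℝ) ^ (1 / (1 + 2 * α) - 1) < 1 := by
    refine Real.rpow_lt_one_of_one_lt_of_neg one_lt_two ?_
    have : 1 / (1 + 2 * α) < 1 := (div_lt_one (by positivity)).2 (by linarith)
    linarith
  refine ((summable_geometric_of_lt_one (by positivity) hr).mul_left 2).of_nonneg_of_le
    (fun j => by positivity) (sum_sq_s₁Coeff_le hα)

lemma two_rpow_le_tTail_s₁Coeff {θ : ℝ} (hθ : 1 ≤ θ) {m L j : ℕ}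
    (hmj : (m : ℝ) ≤ j / (1 + 2 * α)) (hgap : (2 : ℝ) ^ (L + 1) ≤ (j : ℝ) - (m + L : ℕ) + 1) :
    (2 : ℝ) ^ ((m : ℝ) - 1 - j) ≤ tTail (s₁Coeff α) θ (m + L) j := by
  have hm_le_j : m ≤ j := by
    have h2 : (2 : ℝ) ≤ 2 ^ (L + 1) := le_self_pow₀ one_le_two (Nat.succ_ne_zero L)
    push_cast at hgap
    exact_mod_cast (by linarith [(Nat.cast_nonneg L : (0 : ℝ) ≤ L)] : (m : ℝ) ≤ j)
  have hN : (NJj θ (m + L) j : ℝ) ≤ 2 ^ m / 2 :=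
    (NJj_le_two_pow_div hθ hgap).trans_eq (by rw [pow_add, pow_succ]; field_simp)
  have hS : range (2 ^ m) ⊆ range (2 ^ j) :=
    range_subset_range.2 (Nat.pow_le_pow_right two_pos hm_le_j)
  have hβ : ∀ k ∈ range (2 ^ m), (2 : ℝ) ^ (-(j : ℝ)) ≤ s₁Coeff α j k ^ 2 := by
    intro k hk
    rw [s₁Coeff_sq, if_pos]
    calc (k : ℝ) < 2 ^ m := by exact_mod_cast mem_range.1 hk
      _ = (2 : ℝ) ^ (m : ℝ) := (Real.rpow_natCast 2 m).symm
      _ ≤ _ := Real.rpow_le_rpow_of_exponent_le one_le_two hmj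
  calc (2 : ℝ) ^ ((m : ℝ) - 1 - j) = (2 ^ m - 2 ^ m / 2) * (2 : ℝ) ^ (-(j : ℝ)) := by
        rw [sub_eq_add_neg _ (j : ℝ), Real.rpow_add two_pos, Real.rpow_sub_one two_ne_zero,
          Real.rpow_natCast]
        ring
    _ ≤ ((range (2 ^ m)).card - NJj θ (m + L) j) * (2 : ℝ) ^ (-(j : ℝ)) := by
        rw [card_range]; push_cast; gcongr
    _ ≤ tTail (s₁Coeff α) θ (m + L) j :=
        card_sub_NJj_mul_le_tTail _ θ _ j hS (by positivity) hβ

open Filter in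
lemma exists_lt_rpow_mul_tTail_s₁Coeff {θ : ℝ} (hα : 0 < α) (hθ : 1 ≤ θ) (C : ℝ) :
    ∃ J j : ℕ, J ≤ j ∧ C < (2 : ℝ) ^ (2 * (J : ℝ) * α) * tTail (s₁Coeff α) θ J j := by
  set p : ℝ := 1 + 2 * α
  have hp : 0 < p := by positivity
  obtain ⟨L, hL⟩ : ∃ L : ℕ, C < (2 : ℝ) ^ (2 * α * L + -(1 + p)) :=
    (((tendsto_rpow_atTop_of_base_gt_one 2 one_lt_two).comp
      (tendsto_atTop_add_const_right _ _
        (tendsto_natCast_atTop_atTop.const_mul_atTop (by positivity)))).eventually_gt_atTop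
      C).exists
  obtain ⟨j, hj⟩ := exists_nat_ge ((2 ^ (L + 1) + L) * p / (2 * α))
  set m := ⌊j / p⌋₊
  have hm : (m : ℝ) ≤ j / p := Nat.floor_le (by positivity)
  have hm' : (j : ℝ) < p * m + p := by
    rw [← mul_add_one, ← div_lt_iff₀' hp]; exact Nat.lt_floor_add_one _
  have hgap : (2 : ℝ) ^ (L + 1) ≤ j - (m + L : ℕ) + 1 := by
    have : (2 : ℝ) ^ (L + 1) + L ≤ j - j / p := by
      have e : (j : ℝ) - j / p = 2 * α * j / p := by simp only [p]; field_simp; ring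
      rw [div_le_iff₀ (by positivity)] at hj
      rw [e, le_div_iff₀ hp]
      linarith
    push_cast
    linarith
  refine ⟨m + L, j, ?_, hL.trans_le ?_⟩
  · have : ((m + L : ℕ) : ℝ) ≤ j := by linarith [one_le_pow₀ (one_le_two (α := ℝ)) (n := L + 1)]
    exact_mod_cast this
  · calc (2 : ℝ) ^ (2 * α * L + -(1 + p))
        ≤ (2 : ℝ) ^ (2 * ((m + L : ℕ) : ℝ) * α + ((m : ℝ) - 1 - j)) := by
          refine Real.rpow_le_rpow_of_exponent_le one_le_two ?_
          have : p * m = m + 2 * α * m := by simp only [p]; ring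
          push_cast
          linarith
      _ = _ := Real.rpow_add two_pos _ _
      _ ≤ _ := by gcongr; exact two_rpow_le_tTail_s₁Coeff hθ hm hgap

end s₁

/-- the array `β_{j,k} = 2^{−j/2}` for `k < 2^{j/(1+2α)}` and `0`
otherwise does not satisfy the condition `A^α_θ`. -/
theorem stmt_15 (α θ : ℝ) (hα : 0 < α) (hθ : 2 < θ)
    (β : ℕ → ℕ → ℝ)
    (hβdef : ∀ j k : ℕ, β j k =
      if (k : ℝ) < (2 : ℝ) ^ ((j : ℝ) / (1 + 2 * α)) then (2 : ℝ) ^ (-(j : ℝ) / 2)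
      else 0) :
    ¬ CondA β α θ := by
  obtain rfl : β = s₁Coeff α := funext fun j => funext (hβdef j)
  exact not_condA_of_unbounded (summable_sum_sq_s₁Coeff hα)
    (exists_lt_rpow_mul_tTail_s₁Coeff hα (by linarith))
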